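/- arXiv:1409.4683 — 2 statements merged into one kernel-verified Lean document; each statement's English description precedes it below -/
import Mathlib

section
/- (Loomis–Whitney inequality) Let n ≥ 2 and for j = 1, ..., n let π_j : ℝ^n → ℝ^{n-1} be the linear map forgetting the j-th coordinate, π_j(x_1, ..., x_n) = (x_1, ..., x_{j-1}, x_{j+1}, ..., x_n). If f_1, ..., f_n : ℝ^{n-1} → [0, ∞) are measurable functions, then ∫_{ℝ^n} ∏_{j=1}^n f_j(π_j(x))^{1/(n-1)} dx ≤ ∏_{j=1}^n ‖f_j‖_{L¹(ℝ^{n-1})}^{1/(n-1)}. -/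
open MeasureTheory Finset
open scoped ENNReal

noncomputable section

/-- The line in `ℝⁿ` through `p` with direction `v`. -/
def line {n : ℕ} (p v : EuclideanSpace ℝ (Fin n)) : Set (EuclideanSpace ℝ (Fin n)) :=
  {x | ∃ t : ℝ, x = p + t • v}

/-- `ℝ≥0∞`-valued characteristic function of the `W`-neighborhood of the set `A`:
the indicator of `{x : dist(x, A) ≤ W}`. -/
def tubeFn {n : ℕ} (A : Set (EuclideanSpace ℝ (Fin n))) (W : ℝ)
    (x : EuclideanSpace ℝ (Fin n)) : ℝ≥0∞ :=
  Set.indicator {y | Metric.infDist y A ≤ W} 1 x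

/-- Axis-parallel cube with corner `c` and side length `S`. -/
def cube {n : ℕ} (c : EuclideanSpace ℝ (Fin n)) (S : ℝ) : Set (EuclideanSpace ℝ (Fin n)) :=
  {x | ∀ i, x i ∈ Set.Icc (c i) (c i + S)}

/-- The projection `ℝⁿ → ℝ^{n-1}` forgetting the `j`-th coordinate. -/
def proj {n : ℕ} (j : Fin n) (x : EuclideanSpace ℝ (Fin n)) :
    EuclideanSpace ℝ (Fin (n - 1)) :=
  WithLp.toLp 2 (fun i : Fin (n - 1) => if (i : ℕ) < (j : ℕ) then x ⟨i, by omega⟩ else x ⟨i + 1, by omega⟩)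

/-- The graph of `g : ℝ → ℝ^{n-1}` over the `x_j`-axis. -/
def lipGraph {n : ℕ} (j : Fin n) (g : ℝ → EuclideanSpace ℝ (Fin (n - 1))) :
    Set (EuclideanSpace ℝ (Fin n)) :=
  {x | proj j x = g (x j)}

/-!
Induction on the dimension `n`, on `Fin n → α` for an arbitrary σ-finite measure space. Split off
the first coordinate `t`. For fixed `t`, Hölder's inequality with weights `1/(n-1)` and
`(n-2)/(n-1)` separates the factor `f₀`, which does not involve `t`, from the other `n - 1`
factors, whose integral is bounded by the `(n-1)`-dimensional inequality for the slices
`f_j(t, ·)`. Integrating in `t`, the generalized Hölder inequality for these `n - 1` functions of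
`t`, each with weight `1/(n-1)`, turns the product of slice integrals into the product of the full
integrals. The base case `n = 2` is Fubini.
-/

@[fun_prop]
theorem Measurable.fin_cons {α β : Type*} [MeasurableSpace α] [MeasurableSpace β] {n : ℕ}
    {f : β → α} {g : β → Fin n → α} (hf : Measurable f) (hg : Measurable g) :
    Measurable fun x => (Fin.cons (f x) (g x) : Fin (n + 1) → α) :=
  measurable_pi_lambda _ fun i => Fin.cases hf (fun i => (measurable_pi_apply i).comp hg) i

namespace MeasureTheory

variable {α : Type*} [MeasurableSpace α] {μ : Measure α}

theorem lintegral_rpow_mul_prod_rpow_comp_succAbove_le {m : ℕ} {f₀ : (Fin (m + 2) → α) → ℝ≥0∞}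
    {g : Fin (m + 2) → (Fin (m + 1) → α) → ℝ≥0∞} (hf₀ : Measurable f₀)
    (hg : ∀ j, Measurable (g j))
    (hLW : ∫⁻ y, ∏ j, g j (y ∘ j.succAbove) ^ ((1 : ℝ) / (m + 1)) ∂Measure.pi (fun _ => μ)
      ≤ ∏ j, (∫⁻ w, g j w ∂Measure.pi (fun _ => μ)) ^ ((1 : ℝ) / (m + 1))) :
    ∫⁻ y, f₀ y ^ ((1 : ℝ) / (m + 2)) * ∏ j, g j (y ∘ j.succAbove) ^ ((1 : ℝ) / (m + 2))
        ∂Measure.pi (fun _ => μ)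
      ≤ (∫⁻ y, f₀ y ∂Measure.pi (fun _ => μ)) ^ ((1 : ℝ) / (m + 2))
          * ∏ j, (∫⁻ w, g j w ∂Measure.pi (fun _ => μ)) ^ ((1 : ℝ) / (m + 2)) := by
  set p : ℝ := 1 / (m + 2)
  set q : ℝ := (m + 1) / (m + 2)
  have hp : 0 ≤ p := by positivity
  have hq : 0 ≤ q := by positivity
  have hpq : p + q = 1 := by simp only [p, q]; field_simp; ring
  have hpow (a : Fin (m + 2) → ℝ≥0∞) : (∏ j, a j ^ ((1 : ℝ) / (m + 1))) ^ q = ∏ j, a j ^ p := by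
    rw [← ENNReal.prod_rpow_of_nonneg hq]
    refine Finset.prod_congr rfl fun j _ => ?_
    rw [← ENNReal.rpow_mul]
    congr 1
    simp only [p, q]
    field_simp
  calc ∫⁻ y, f₀ y ^ p * ∏ j, g j (y ∘ j.succAbove) ^ p ∂Measure.pi (fun _ => μ)
      = ∫⁻ y, f₀ y ^ p * (∏ j, g j (y ∘ j.succAbove) ^ ((1 : ℝ) / (m + 1))) ^ q
          ∂Measure.pi (fun _ => μ) := by simp only [hpow]
    _ ≤ (∫⁻ y, f₀ y ∂Measure.pi (fun _ => μ)) ^ p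
          * (∫⁻ y, ∏ j, g j (y ∘ j.succAbove) ^ ((1 : ℝ) / (m + 1)) ∂Measure.pi (fun _ => μ)) ^ q :=
        ENNReal.lintegral_mul_norm_pow_le hf₀.aemeasurable
          (Measurable.aemeasurable (by fun_prop)) hp hq hpq
    _ ≤ (∫⁻ y, f₀ y ∂Measure.pi (fun _ => μ)) ^ p
          * ∏ j, (∫⁻ w, g j w ∂Measure.pi (fun _ => μ)) ^ p := by
        rw [← hpow]
        gcongr

variable [SigmaFinite μ]

theorem lintegral_pi_fin_succ_cons {n : ℕ} {F : (Fin (n + 1) → α) → ℝ≥0∞} (hF : Measurable F) :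
    ∫⁻ x, F x ∂Measure.pi (fun _ => μ)
      = ∫⁻ t, ∫⁻ y, F (Fin.cons t y) ∂Measure.pi (fun _ => μ) ∂μ := by
  rw [← ((measurePreserving_piFinSuccAbove (fun _ => μ) 0).symm).lintegral_comp_emb
    (MeasurableEquiv.measurableEmbedding _), lintegral_prod]
  · simp [MeasurableEquiv.piFinSuccAbove_symm_apply, Fin.insertNthEquiv, Fin.insertNth_zero']
  · exact (hF.comp (MeasurableEquiv.measurable _)).aemeasurable

theorem lintegral_prod_comp_succAbove_fin_two {f : Fin 2 → (Fin 1 → α) → ℝ≥0∞}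
    (hf : ∀ j, Measurable (f j)) :
    ∫⁻ x, ∏ j, f j (x ∘ j.succAbove) ∂Measure.pi (fun _ => μ)
      = ∏ j, ∫⁻ y, f j y ∂Measure.pi (fun _ => μ) := by
  have hcons₀ (t : α) (y : Fin 1 → α) : (Fin.cons t y : Fin 2 → α) ∘ (0 : Fin 2).succAbove = y := by
    funext i; fin_cases i; rfl
  have hcons₁ (t : α) (y : Fin 1 → α) :
      (Fin.cons t y : Fin 2 → α) ∘ (1 : Fin 2).succAbove = Fin.cons t Fin.elim0 := by
    funext i; fin_cases i; rfl
  have h₁ : ∫⁻ y, f 1 y ∂Measure.pi (fun _ => μ) = ∫⁻ t, f 1 (Fin.cons t Fin.elim0) ∂μ := by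
    rw [lintegral_pi_fin_succ_cons (hf 1)]
    congr! with t
    simp [Subsingleton.elim _ (Fin.elim0 : Fin 0 → α)]
  rw [lintegral_pi_fin_succ_cons (by fun_prop)]
  simp only [Fin.prod_univ_two, hcons₀, hcons₁, h₁]
  rw [lintegral_congr fun t => lintegral_mul_const _ (hf 0), lintegral_const_mul _ (by fun_prop)]

theorem lintegral_prod_rpow_comp_succAbove_le (m : ℕ) {f : Fin (m + 2) → (Fin (m + 1) → α) → ℝ≥0∞}
    (hf : ∀ j, Measurable (f j)) :
    ∫⁻ x, ∏ j, f j (x ∘ j.succAbove) ^ ((1 : ℝ) / (m + 1)) ∂Measure.pi (fun _ => μ)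
      ≤ ∏ j, (∫⁻ y, f j y ∂Measure.pi (fun _ => μ)) ^ ((1 : ℝ) / (m + 1)) := by
  induction m with
  | zero =>
    simpa using (lintegral_prod_comp_succAbove_fin_two hf).le
  | succ m ih =>
    rw [show ((m + 1 : ℕ) : ℝ) + 1 = m + 2 by push_cast; ring]
    set p : ℝ := 1 / (m + 2)
    have hp : 0 ≤ p := by positivity
    have hsum : ∑ _j : Fin (m + 2), p = 1 := by
      simp only [Finset.sum_const, Finset.card_univ, Fintype.card_fin, nsmul_eq_mul, p]
      push_cast
      field_simp
    set g : α → Fin (m + 2) → (Fin (m + 1) → α) → ℝ≥0∞ := fun t j w => f j.succ (Fin.cons t w)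
    have hg (t : α) (j : Fin (m + 2)) : Measurable (g t j) := by fun_prop
    calc ∫⁻ x, ∏ j, f j (x ∘ j.succAbove) ^ p ∂Measure.pi (fun _ => μ)
        = ∫⁻ t, ∫⁻ y, f 0 y ^ p * ∏ j, g t j (y ∘ j.succAbove) ^ p ∂Measure.pi (fun _ => μ) ∂μ := by
          rw [lintegral_pi_fin_succ_cons (by fun_prop)]
          refine lintegral_congr fun t => lintegral_congr fun y => ?_
          rw [Fin.prod_univ_succ]
          simp only [Fin.cons_comp_succ_succAbove]
          rfl
      _ ≤ ∫⁻ t, (∫⁻ y, f 0 y ∂Measure.pi (fun _ => μ)) ^ p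
            * ∏ j, (∫⁻ w, g t j w ∂Measure.pi (fun _ => μ)) ^ p ∂μ :=
          lintegral_mono fun t =>
            lintegral_rpow_mul_prod_rpow_comp_succAbove_le (hf 0) (hg t) (ih (hg t))
      _ ≤ (∫⁻ y, f 0 y ∂Measure.pi (fun _ => μ)) ^ p
            * ∏ j, (∫⁻ t, ∫⁻ w, g t j w ∂Measure.pi (fun _ => μ) ∂μ) ^ p := by
          rw [lintegral_const_mul _ (by fun_prop)]
          gcongr
          exact ENNReal.lintegral_prod_norm_pow_le _ (fun j _ => by fun_prop) hsum fun _ _ => hp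
      _ = ∏ j, (∫⁻ y, f j y ∂Measure.pi (fun _ => μ)) ^ p := by
          rw [Fin.prod_univ_succ (fun j => (∫⁻ y, f j y ∂Measure.pi (fun _ => μ)) ^ p)]
          congr 1
          exact Finset.prod_congr rfl fun j _ => by rw [lintegral_pi_fin_succ_cons (hf _)]

end MeasureTheory

theorem lintegral_euclideanSpace_eq_lintegral_pi {ι : Type*} [Fintype ι]
    (F : EuclideanSpace ℝ ι → ℝ≥0∞) :
    ∫⁻ x, F x = ∫⁻ y : ι → ℝ, F (WithLp.toLp 2 y) :=
  ((PiLp.volume_preserving_toLp ι).lintegral_comp_emb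
    (MeasurableEquiv.toLp 2 (ι → ℝ)).measurableEmbedding F).symm

theorem proj_toLp {k : ℕ} (j : Fin (k + 1)) (y : Fin (k + 1) → ℝ) :
    proj j (WithLp.toLp 2 y) = WithLp.toLp 2 (y ∘ j.succAbove) := by
  ext i
  simp only [proj, Fin.succAbove, Fin.lt_def, Fin.val_castSucc, Function.comp_apply]
  split_ifs <;> rfl

theorem loomis_whitney_general (n : ℕ) (hn : 2 ≤ n)
    (f : Fin n → EuclideanSpace ℝ (Fin (n - 1)) → ℝ)
    (hf : ∀ j, Measurable (f j)) :
    ∫⁻ x : EuclideanSpace ℝ (Fin n),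
        ∏ j : Fin n, (ENNReal.ofReal (f j (proj j x))) ^ ((1 : ℝ) / ((n : ℝ) - 1))
      ≤ ∏ j : Fin n,
          (∫⁻ y : EuclideanSpace ℝ (Fin (n - 1)), ENNReal.ofReal (f j y)) ^
            ((1 : ℝ) / ((n : ℝ) - 1)) := by
  obtain ⟨m, rfl⟩ : ∃ m, n = m + 2 := ⟨n - 2, by omega⟩
  rw [show ((m + 2 : ℕ) : ℝ) - 1 = m + 1 by push_cast; ring]
  simp only [lintegral_euclideanSpace_eq_lintegral_pi, proj_toLp]
  exact lintegral_prod_rpow_comp_succAbove_le m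
    (f := fun j w => ENNReal.ofReal (f j (WithLp.toLp 2 w))) (by fun_prop)

/-- The Loomis–Whitney inequality: for measurable `f_j : ℝ^{n-1} → [0,∞)`,
`∫_{ℝⁿ} ∏_j f_j(π_j x)^{1/(n-1)} dx ≤ ∏_j ‖f_j‖_{L¹}^{1/(n-1)}`. -/
theorem loomis_whitney (n : ℕ) (hn : 2 ≤ n)
    (f : Fin n → EuclideanSpace ℝ (Fin (n - 1)) → ℝ)
    (hf : ∀ j, Measurable (f j)) (hf0 : ∀ j y, 0 ≤ f j y) :
    ∫⁻ x : EuclideanSpace ℝ (Fin n),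
        ∏ j : Fin n, (ENNReal.ofReal (f j (proj j x))) ^ ((1 : ℝ) / ((n : ℝ) - 1))
      ≤ ∏ j : Fin n,
          (∫⁻ y : EuclideanSpace ℝ (Fin (n - 1)), ENNReal.ofReal (f j y)) ^
            ((1 : ℝ) / ((n : ℝ) - 1)) :=
  loomis_whitney_general n hn f hf
end
end

section
/- (Axis-parallel multilinear Kakeya) Let n ≥ 2 and suppose l_{j,a} are lines in ℝ^n, for j = 1, ..., n and a = 1, ..., N_j, such that each line l_{j,a} is exactly parallel to the x_j-axis. Then ∫_{ℝ^n} ∏_{j=1}^n ( Σ_{a=1}^{N_j} T_{j,a} )^{1/(n-1)} ≤ ω_{n-1}^{n/(n-1)} ∏_{j=1}^n N_j^{1/(n-1)}, where T_{j,a} is the characteristic function of the 1-neighborhood of l_{j,a} and ω_{n-1} is the Lebesgue measure of the unit ball in ℝ^{n-1}. -/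
/-! Each `T_{j,a}` depends only on the coordinates other than `x_j`. For such functions the
Loomis–Whitney inequality, proved by integrating out one coordinate at a time and applying
Hölder's inequality to the `n - 1` factors that still depend on it, bounds the integral by
`∏_j (∫_{ℝ^{n-1}} ∑_a T_{j,a})^{1/(n-1)}`; the slice of each `T_{j,a}` orthogonal to its line
is a unit ball of `ℝ^{n-1}`, so each of these integrals is `N_j ω_{n-1}`. -/

open MeasureTheory Finset
open scoped ENNReal

noncomputable section

open Function

section Marginal

variable {ι : Type*} [DecidableEq ι] {A : ι → Type*} [∀ i, MeasurableSpace (A i)]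
  (μ : ∀ i, Measure (A i))

theorem lmarginal_finset_sum {α : Type*} (s : Finset ι) (t : Finset α)
    {f : α → (∀ i, A i) → ℝ≥0∞} (hf : ∀ a, Measurable (f a)) (x : ∀ i, A i) :
    (∫⋯∫⁻_s, (fun x => ∑ a ∈ t, f a x) ∂μ) x = ∑ a ∈ t, (∫⋯∫⁻_s, f a ∂μ) x :=
  lintegral_finsetSum _ fun a _ => (hf a).comp measurable_updateFinset

variable [∀ i, SigmaFinite (μ i)]

theorem lmarginal_update_eq_of_update_eq {f : (∀ i, A i) → ℝ≥0∞} (hf : Measurable f) {i : ι}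
    (hfi : ∀ x t, f (update x i t) = f x) (s : Finset ι) (x : ∀ i, A i) (t : A i) :
    (∫⋯∫⁻_s, f ∂μ) (update x i t) = (∫⋯∫⁻_s, f ∂μ) x := by
  by_cases hi : i ∈ s
  · exact lmarginal_update_of_mem μ hi f x t
  · rw [lmarginal_update_of_notMem hf hi]
    exact congrArg (fun g => (∫⋯∫⁻_s, g ∂μ) x) (funext fun y => hfi y t)

variable [Fintype ι] {p : ℝ} {f : ι → (∀ i, A i) → ℝ≥0∞}

theorem lintegral_prod_lmarginal_erase_rpow_le (hp₀ : 0 ≤ p)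
    (hp : ((Fintype.card ι : ℝ) - 1) * p = 1) (hf : ∀ i, Measurable (f i))
    (hfi : ∀ i x t, f i (update x i t) = f i x) {s : Finset ι} {i₀ : ι} (hi₀ : i₀ ∉ s)
    (x : ∀ i, A i) :
    ∫⁻ t, ∏ i, (∫⋯∫⁻_(s.erase i), f i ∂μ) (update x i₀ t) ^ p ∂μ i₀
      ≤ ∏ i, (∫⋯∫⁻_((insert i₀ s).erase i), f i ∂μ) x ^ p := by
  set g := fun i => ∫⋯∫⁻_(s.erase i), f i ∂μ
  have hg : ∀ i, Measurable (g i) := fun i => (hf i).lmarginal μ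
  have hg_update : ∀ t, g i₀ (update x i₀ t) = g i₀ x :=
    lmarginal_update_eq_of_update_eq μ (hf i₀) (hfi i₀) _ x
  have hsum : ∑ _i ∈ univ.erase i₀, p = 1 := by
    rw [sum_const, card_erase_of_mem (mem_univ _), card_univ, nsmul_eq_mul,
      Nat.cast_pred (Fintype.card_pos_iff.2 ⟨i₀⟩), hp]
  have hinsert : ∀ i ≠ i₀,
      (∫⋯∫⁻_((insert i₀ s).erase i), f i ∂μ) x = ∫⁻ t, g i (update x i₀ t) ∂μ i₀ := by
    intro i hi
    rw [erase_insert_of_ne hi.symm, lmarginal_insert _ (hf i) fun h => hi₀ (mem_of_mem_erase h)]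
  calc ∫⁻ t, ∏ i, g i (update x i₀ t) ^ p ∂μ i₀
      = g i₀ x ^ p * ∫⁻ t, ∏ i ∈ univ.erase i₀, g i (update x i₀ t) ^ p ∂μ i₀ := by
        simp_rw [← mul_prod_erase univ _ (mem_univ i₀), hg_update]
        exact lintegral_const_mul _ (Finset.measurable_prod _ fun i _ =>
          ((hg i).comp (measurable_update x)).pow_const p)
    _ ≤ g i₀ x ^ p * ∏ i ∈ univ.erase i₀, (∫⁻ t, g i (update x i₀ t) ∂μ i₀) ^ p := by
        gcongr
        exact ENNReal.lintegral_prod_norm_pow_le _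
          (fun i _ => ((hg i).comp (measurable_update x)).aemeasurable) hsum fun _ _ => hp₀
    _ = ∏ i, (∫⋯∫⁻_((insert i₀ s).erase i), f i ∂μ) x ^ p := by
        rw [← mul_prod_erase univ _ (mem_univ i₀), erase_insert hi₀]
        congr 1
        · simp only [g, erase_eq_of_notMem hi₀]
        · exact prod_congr rfl fun i hi => by rw [hinsert i (ne_of_mem_erase hi)]

theorem lmarginal_prod_rpow_le (hp₀ : 0 ≤ p) (hp : ((Fintype.card ι : ℝ) - 1) * p = 1)
    (hf : ∀ i, Measurable (f i)) (hfi : ∀ i x t, f i (update x i t) = f i x) (s : Finset ι) :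
    ∫⋯∫⁻_s, (fun x => ∏ i, f i x ^ p) ∂μ ≤ fun x => ∏ i, (∫⋯∫⁻_(s.erase i), f i ∂μ) x ^ p := by
  induction s using Finset.induction with
  | empty => simp
  | insert i₀ s hi₀ ih =>
    intro x
    rw [lmarginal_insert _ (Finset.measurable_prod _ fun i _ => (hf i).pow_const p) hi₀]
    exact (lintegral_mono fun t => ih _).trans
      (lintegral_prod_lmarginal_erase_rpow_le μ hp₀ hp hf hfi hi₀ x)

/-- The Loomis–Whitney inequality. -/
theorem lintegral_prod_rpow_le_prod_lmarginal (hp₀ : 0 ≤ p)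
    (hp : ((Fintype.card ι : ℝ) - 1) * p = 1) (hf : ∀ i, Measurable (f i))
    (hfi : ∀ i x t, f i (update x i t) = f i x) (x₀ : ∀ i, A i) :
    ∫⁻ x, ∏ i, f i x ^ p ∂Measure.pi μ ≤ ∏ i, (∫⋯∫⁻_(univ.erase i), f i ∂μ) x₀ ^ p := by
  rw [lintegral_eq_lmarginal_univ x₀]
  exact lmarginal_prod_rpow_le μ hp₀ hp hf hfi univ x₀

end Marginal

theorem ENNReal.prod_mul_const_rpow {ι : Type*} [Fintype ι] (a : ι → ℝ≥0∞) (b : ℝ≥0∞) {q : ℝ}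
    (hq : 0 ≤ q) : ∏ i, (a i * b) ^ q = b ^ (Fintype.card ι * q) * ∏ i, a i ^ q := by
  rw [mul_comm (Fintype.card ι : ℝ), ENNReal.rpow_mul, ENNReal.rpow_natCast, mul_comm,
    ← card_univ, ← prod_const, ← prod_mul_distrib]
  exact prod_congr rfl fun i _ => ENNReal.mul_rpow_of_nonneg _ _ hq

/-- For `s = univ.erase j` this is the unit neighbourhood of the line through `c` parallel to the
`j`-th axis (`tubeFn_line_single`). -/
def unitTube {ι : Type*} (s : Finset ι) (c : ι → ℝ) : Set (ι → ℝ) :=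
  {y | ∑ i ∈ s, (y i - c i) ^ 2 ≤ 1}

def tubeCount {ι α : Type*} [Fintype α] (s : Finset ι) (c : α → ι → ℝ) (y : ι → ℝ) : ℝ≥0∞ :=
  ∑ a, (unitTube s (c a)).indicator 1 y

section UnitTube

variable {ι : Type*} (s : Finset ι) (c : ι → ℝ)

theorem measurableSet_unitTube : MeasurableSet (unitTube s c) :=
  measurableSet_le (Finset.measurable_sum _ fun i _ =>
    ((measurable_pi_apply i).sub_const _).pow_const 2) measurable_const

theorem update_mem_unitTube_iff [DecidableEq ι] {i : ι} (hi : i ∉ s) (y : ι → ℝ) (t : ℝ) :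
    update y i t ∈ unitTube s c ↔ y ∈ unitTube s c := by
  have hsum : ∑ k ∈ s, (update y i t k - c k) ^ 2 = ∑ k ∈ s, (y k - c k) ^ 2 :=
    sum_congr rfl fun k hk => by rw [update_of_ne (ne_of_mem_of_not_mem hk hi)]
  simp only [unitTube, Set.mem_ofPred_eq, hsum]

theorem volume_unitTube_univ [Fintype ι] [Nonempty ι] {m : ℕ} (e : ι ≃ Fin m) :
    volume (unitTube univ c) = volume (Metric.ball (0 : EuclideanSpace ℝ (Fin m)) 1) := by
  have htube : unitTube univ c = WithLp.toLp 2 ⁻¹' Metric.closedBall (WithLp.toLp 2 c) 1 := by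
    ext y
    simp [unitTube, EuclideanSpace.dist_eq, Real.dist_eq, sq_abs]
  rw [htube, (PiLp.volume_preserving_toLp ι).measure_preimage
      Metric.isClosed_closedBall.measurableSet.nullMeasurableSet,
    Measure.addHaar_closedBall_eq_addHaar_ball, Measure.addHaar_ball_center,
    ← (LinearIsometryEquiv.piLpCongrLeft 2 ℝ ℝ e).measurePreserving.measure_preimage
      measurableSet_ball.nullMeasurableSet]
  congr 1
  ext y
  simp

theorem lmarginal_indicator_unitTube [DecidableEq ι] (hs₀ : s.Nonempty) {m : ℕ}
    (hs : s.card = m) (x : ι → ℝ) :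
    (∫⋯∫⁻_s, (unitTube s c).indicator 1 ∂fun _ => volume) x
      = volume (Metric.ball (0 : EuclideanSpace ℝ (Fin m)) 1) := by
  have hpre : updateFinset x s ⁻¹' unitTube s c = unitTube univ fun i : s => c i := by
    ext y
    simp [unitTube, updateFinset, ← sum_coe_sort s]
  have : Nonempty s := hs₀.to_subtype
  simp_rw [lmarginal, ← Set.indicator_comp_right]
  rw [hpre, Pi.one_comp, lintegral_indicator_one (measurableSet_unitTube _ _), ← volume_pi]
  exact volume_unitTube_univ _ (s.equivFin.trans (finCongr hs))

end UnitTube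

section TubeCount

variable {ι α : Type*} [Fintype α] (s : Finset ι) (c : α → ι → ℝ)

theorem measurable_tubeCount : Measurable (tubeCount s c) :=
  Finset.measurable_sum _ fun _ _ => measurable_const.indicator (measurableSet_unitTube _ _)

theorem tubeCount_update [DecidableEq ι] {i : ι} (hi : i ∉ s) (y : ι → ℝ) (t : ℝ) :
    tubeCount s c (update y i t) = tubeCount s c y := by
  classical
  simp only [tubeCount, Set.indicator_apply, update_mem_unitTube_iff _ _ hi, Pi.one_apply]

theorem lmarginal_tubeCount [DecidableEq ι] (hs₀ : s.Nonempty) {m : ℕ} (hs : s.card = m)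
    (x : ι → ℝ) :
    (∫⋯∫⁻_s, tubeCount s c ∂fun _ => volume) x
      = Fintype.card α * volume (Metric.ball (0 : EuclideanSpace ℝ (Fin m)) 1) := by
  unfold tubeCount
  rw [lmarginal_finset_sum _ _ _ (f := fun a => (unitTube s (c a)).indicator 1)
    (fun a => measurable_const.indicator (measurableSet_unitTube _ _))]
  simp only [lmarginal_indicator_unitTube _ _ hs₀ hs, sum_const, card_univ, nsmul_eq_mul]

end TubeCount

theorem dist_add_smul_single_sq {ι : Type*} [Fintype ι] [DecidableEq ι]
    (y c : EuclideanSpace ℝ ι) (j : ι) (t : ℝ) :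
    dist y (c + t • EuclideanSpace.single j 1) ^ 2
      = (y j - c j - t) ^ 2 + ∑ i ∈ univ.erase j, (y i - c i) ^ 2 := by
  rw [EuclideanSpace.dist_eq, Real.sq_sqrt (by positivity), ← add_sum_erase _ _ (mem_univ j)]
  congr 1
  · simp [Real.dist_eq, sq_abs, sub_sub]
  · refine sum_congr rfl fun i hi => ?_
    simp [Real.dist_eq, sq_abs, ne_of_mem_erase hi]

theorem infDist_line_single {n : ℕ} (y c : EuclideanSpace ℝ (Fin n)) (j : Fin n) :
    Metric.infDist y (line c (EuclideanSpace.single j 1))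
      = √(∑ i ∈ univ.erase j, (y i - c i) ^ 2) := by
  have hne : (line c (EuclideanSpace.single j 1)).Nonempty := ⟨c, 0, by simp⟩
  have hmem : c + (y j - c j) • EuclideanSpace.single j 1 ∈ line c (EuclideanSpace.single j 1) :=
    ⟨_, rfl⟩
  apply le_antisymm
  · refine (Metric.infDist_le_dist_of_mem hmem).trans_eq ?_
    rw [← Real.sqrt_sq dist_nonneg, dist_add_smul_single_sq, sub_self, sq, zero_mul, zero_add]
  · refine (Metric.le_infDist hne).2 ?_
    rintro _ ⟨t, rfl⟩
    rw [← Real.sqrt_sq dist_nonneg, dist_add_smul_single_sq]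
    exact Real.sqrt_le_sqrt (le_add_of_nonneg_left (sq_nonneg _))

theorem tubeFn_line_single {n : ℕ} (c y : EuclideanSpace ℝ (Fin n)) (j : Fin n) :
    tubeFn (line c (EuclideanSpace.single j 1)) 1 y
      = (unitTube (univ.erase j) c).indicator 1 (WithLp.ofLp y) := by
  simp only [tubeFn, Set.indicator_apply, Set.mem_ofPred_eq, infDist_line_single, unitTube,
    Real.sqrt_le_one]
  rfl

/-- Axis-parallel multilinear Kakeya: if each line `l_{j,a}` is exactly parallel to the
`x_j`-axis then `∫_{ℝⁿ} ∏_j (∑_a T_{j,a})^{1/(n-1)} ≤ ω_{n-1}^{n/(n-1)} ∏_j N_j^{1/(n-1)}`,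
where `ω_{n-1}` is the volume of the unit ball in `ℝ^{n-1}`. -/
theorem axis_parallel_kakeya (n : ℕ) (hn : 2 ≤ n) (N : Fin n → ℕ)
    (p : (j : Fin n) → Fin (N j) → EuclideanSpace ℝ (Fin n)) :
    ∫⁻ x : EuclideanSpace ℝ (Fin n),
        ∏ j : Fin n, (∑ a : Fin (N j),
          tubeFn (line (p j a) (EuclideanSpace.single j 1)) 1 x) ^ ((1 : ℝ) / ((n : ℝ) - 1))
      ≤ (volume (Metric.ball (0 : EuclideanSpace ℝ (Fin (n - 1))) 1)) ^
            ((n : ℝ) / ((n : ℝ) - 1)) *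
          ∏ j : Fin n, (N j : ℝ≥0∞) ^ ((1 : ℝ) / ((n : ℝ) - 1)) := by
  have hn₁ : (0 : ℝ) < n - 1 := by
    have : (2 : ℝ) ≤ n := by exact_mod_cast hn
    linarith
  set q : ℝ := 1 / ((n : ℝ) - 1)
  set F : Fin n → (Fin n → ℝ) → ℝ≥0∞ := fun j => tubeCount (univ.erase j) fun a => p j a
  have hmarg : ∀ j, (∫⋯∫⁻_(univ.erase j), F j ∂fun _ => volume) 0
      = N j * volume (Metric.ball (0 : EuclideanSpace ℝ (Fin (n - 1))) 1) := fun j => by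
    have hcard : (univ.erase j).card = n - 1 := by simp
    rw [lmarginal_tubeCount _ _ (card_pos.1 (by omega)) hcard, Fintype.card_fin]
  calc _ = ∫⁻ y, ∏ j, F j y ^ q ∂Measure.pi fun _ => volume := by
        simp_rw [tubeFn_line_single]
        exact (PiLp.volume_preserving_ofLp _).lintegral_comp
          (Finset.measurable_prod _ fun j _ => (measurable_tubeCount _ _).pow_const q)
    _ ≤ ∏ j, (∫⋯∫⁻_(univ.erase j), F j ∂fun _ => volume) 0 ^ q :=
        lintegral_prod_rpow_le_prod_lmarginal _ (by positivity)
          (by rw [Fintype.card_fin]; exact mul_one_div_cancel hn₁.ne')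
          (fun j => measurable_tubeCount _ _)
          (fun j => tubeCount_update _ _ (notMem_erase j univ)) 0
    _ = _ := by
        simp_rw [hmarg]
        rw [ENNReal.prod_mul_const_rpow _ _ (by positivity), Fintype.card_fin, mul_one_div]
end
end
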